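/- In the finite MDP setup, for any two policies π and π', the difference of discounted future state distributions satisfies d^{π'} − d^π = γ (I − γP_{π'})^{−1} (P_{π'} − P_π) d^π. -/

import Mathlib

/-!
Write `M = 1 - γ P_π` and `M' = 1 - γ P_π'`. Both are invertible because the columns of a
stochastic matrix sum to one, so `1 - γ P` is strictly diagonally dominant by columns. The resolvent
identity `M'⁻¹ - M⁻¹ = M'⁻¹ (M - M') M⁻¹` with `M - M' = γ (P_π' - P_π)`, applied to `(1 - γ) μ`,
is the claimed formula.
-/

open Finset Matrix

noncomputable section

/-- The state-transition matrix of policy `π`: `(Pmat P π) s' s = Σ_a P(s'|s,a) π(a|s)`. -/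
def Pmat {S A : Type*} [Fintype A] (P : S → A → S → ℝ) (π : S → A → ℝ) : Matrix S S ℝ :=
  Matrix.of fun s' s => ∑ a, P s a s' * π s a

/-- The discounted future state distribution `d^π = (1-γ)(I - γ P_π)⁻¹ μ`. -/
def dpi {S A : Type*} [Fintype S] [Fintype A] [DecidableEq S]
    (γ : ℝ) (P : S → A → S → ℝ) (μ : S → ℝ) (π : S → A → ℝ) : S → ℝ :=
  (1 - γ) • ((1 - γ • Pmat P π)⁻¹).mulVec μ

theorem Pmat_mem_colStochastic {S A : Type*} [Fintype S] [Fintype A] [DecidableEq S]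
    {P : S → A → S → ℝ} (hP0 : ∀ s a s', 0 ≤ P s a s') (hP1 : ∀ s a, ∑ s', P s a s' = 1)
    {π : S → A → ℝ} (hπ0 : ∀ s a, 0 ≤ π s a) (hπ1 : ∀ s, ∑ a, π s a = 1) :
    Pmat P π ∈ colStochastic ℝ S := by
  refine mem_colStochastic_iff_sum.2 ⟨fun s' s => ?_, fun s => ?_⟩
  · exact sum_nonneg fun a _ => mul_nonneg (hP0 s a s') (hπ0 s a)
  · simp only [Pmat, of_apply]
    rw [sum_comm]
    simp only [← sum_mul, hP1, one_mul, hπ1]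

namespace Matrix

variable {n : Type*} [Fintype n] [DecidableEq n]

theorem isUnit_one_sub_smul_of_mem_colStochastic {M : Matrix n n ℝ} (hM : M ∈ colStochastic ℝ n)
    {γ : ℝ} (hγ : |γ| < 1) : IsUnit (1 - γ • M) := by
  rw [isUnit_iff_isUnit_det, isUnit_iff_ne_zero]
  refine det_ne_zero_of_sum_col_lt_diag fun k => ?_
  have hoff : ∑ i ∈ univ.erase k, ‖(1 - γ • M) i k‖ = |γ| * (1 - M k k) := by
    rw [← sum_col_of_mem_colStochastic hM k, ← sum_erase_eq_sub (mem_univ k), mul_sum]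
    refine sum_congr rfl fun i hi => ?_
    rw [sub_apply, one_apply_ne (ne_of_mem_erase hi), smul_apply, smul_eq_mul, zero_sub, norm_neg,
      Real.norm_eq_abs, abs_mul, abs_of_nonneg (nonneg_of_mem_colStochastic hM)]
  have hdiag : ‖(1 - γ • M) k k‖ = |1 - γ * M k k| := by simp
  have hkk : 0 ≤ M k k := nonneg_of_mem_colStochastic hM
  rw [hoff, hdiag]
  calc |γ| * (1 - M k k) < 1 - |γ| * M k k := by rw [mul_sub, mul_one]; linarith
    _ ≤ 1 - γ * M k k := by gcongr; exact le_abs_self γ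
    _ ≤ |1 - γ * M k k| := le_abs_self _

theorem inv_one_sub_smul_sub_inv_one_sub_smul {α : Type*} [CommRing α] {B B' : Matrix n n α}
    {γ : α} (h : IsUnit (1 - γ • B') ↔ IsUnit (1 - γ • B)) :
    (1 - γ • B')⁻¹ - (1 - γ • B)⁻¹ = γ • ((1 - γ • B')⁻¹ * (B' - B) * (1 - γ • B)⁻¹) := by
  rw [inv_sub_inv h, sub_sub_sub_cancel_left, ← smul_sub, Matrix.mul_smul, Matrix.smul_mul]

end Matrix

theorem stmt_6_general {S A : Type*} [Fintype S] [Fintype A] [DecidableEq S]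
    (γ : ℝ) (hγ0 : 0 ≤ γ) (hγ1 : γ < 1)
    (P : S → A → S → ℝ) (hP0 : ∀ s a s', 0 ≤ P s a s') (hP1 : ∀ s a, ∑ s', P s a s' = 1)
    (μ : S → ℝ)
    (π π' : S → A → ℝ)
    (hπ0 : ∀ s a, 0 ≤ π s a) (hπ1 : ∀ s, ∑ a, π s a = 1)
    (hπ'0 : ∀ s a, 0 ≤ π' s a) (hπ'1 : ∀ s, ∑ a, π' s a = 1) :
    dpi γ P μ π' - dpi γ P μ π
      = γ • ((1 - γ • Pmat P π')⁻¹).mulVec ((Pmat P π' - Pmat P π).mulVec (dpi γ P μ π)) := by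
  have hγ : |γ| < 1 := abs_lt.2 ⟨by linarith, hγ1⟩
  have hU := isUnit_one_sub_smul_of_mem_colStochastic (Pmat_mem_colStochastic hP0 hP1 hπ0 hπ1) hγ
  have hU' :=
    isUnit_one_sub_smul_of_mem_colStochastic (Pmat_mem_colStochastic hP0 hP1 hπ'0 hπ'1) hγ
  rw [dpi, dpi, ← smul_sub, ← sub_mulVec,
    inv_one_sub_smul_sub_inv_one_sub_smul (iff_of_true hU' hU), smul_mulVec, ← mulVec_mulVec,
    ← mulVec_mulVec, mulVec_smul, mulVec_smul, smul_comm]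

theorem stmt_6 {S A : Type*} [Fintype S] [Fintype A] [Nonempty S] [Nonempty A] [DecidableEq S]
    (γ : ℝ) (hγ0 : 0 ≤ γ) (hγ1 : γ < 1)
    (P : S → A → S → ℝ) (hP0 : ∀ s a s', 0 ≤ P s a s') (hP1 : ∀ s a, ∑ s', P s a s' = 1)
    (μ : S → ℝ) (hμ0 : ∀ s, 0 ≤ μ s) (hμ1 : ∑ s, μ s = 1)
    (π π' : S → A → ℝ)
    (hπ0 : ∀ s a, 0 ≤ π s a) (hπ1 : ∀ s, ∑ a, π s a = 1)
    (hπ'0 : ∀ s a, 0 ≤ π' s a) (hπ'1 : ∀ s, ∑ a, π' s a = 1) :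
    dpi γ P μ π' - dpi γ P μ π
      = γ • ((1 - γ • Pmat P π')⁻¹).mulVec ((Pmat P π' - Pmat P π).mulVec (dpi γ P μ π)) :=
  stmt_6_general γ hγ0 hγ1 P hP0 hP1 μ π π' hπ0 hπ1 hπ'0 hπ'1
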